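/- arXiv:1809.09495 — 10 statements merged into one kernel-verified Lean document; each statement's English description precedes it below -/
import Mathlib

section
/- The axiom ΔM, i.e. every instance of Δφ → Δ(φ ∨ ψ) ∨ Δ(¬φ ∨ χ), is valid on the class of all neighborhood frames satisfying property (m): for every neighborhood model M whose neighborhood function is closed under supersets at every state, every state s, and all formulas φ, ψ, χ, if M,s ⊨ Δφ then M,s ⊨ Δ(φ ∨ ψ) ∨ Δ(¬φ ∨ χ). -/
/-- The language L(Δ) of contingency logic: φ ::= p | ¬φ | (φ ∧ φ) | Δφ. -/
inductive Formula (P : Type) : Type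
  | atom : P → Formula P
  | neg : Formula P → Formula P
  | and : Formula P → Formula P → Formula P
  | delta : Formula P → Formula P

namespace Formula

variable {P : Type}

/-- φ ∨ ψ abbreviates ¬(¬φ ∧ ¬ψ). -/
def or (φ ψ : Formula P) : Formula P := neg (and (neg φ) (neg ψ))

/-- φ → ψ abbreviates ¬(φ ∧ ¬ψ). -/
def imp (φ ψ : Formula P) : Formula P := neg (and φ (neg ψ))

/-- φ ↔ ψ abbreviates (φ → ψ) ∧ (ψ → φ). -/
def iffF (φ ψ : Formula P) : Formula P := and (imp φ ψ) (imp ψ φ)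

end Formula

/-- ⊤ : a fixed tautology (p ∨ ¬p for a fixed propositional variable p). -/
noncomputable def Formula.top (P : Type) [Nonempty P] : Formula P :=
  Formula.or (Formula.atom (Classical.arbitrary P))
    (Formula.neg (Formula.atom (Classical.arbitrary P)))

/-- A neighborhood model ⟨S, N, V⟩: a nonempty set of states `S`, a neighborhood
function `N : S → P(P(S))` and a valuation `V`. -/
structure NbhdModel (P : Type) where
  S : Type
  nonempty : Nonempty S
  N : S → Set (Set S)
  V : P → Set S

/-- The truth set ⟦φ⟧ of a formula in a neighborhood model; the clause for `Δφ` says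
that a state `s` satisfies `Δφ` iff ⟦φ⟧ ∈ N(s) or S ∖ ⟦φ⟧ ∈ N(s). -/
def NbhdModel.truthSet {P : Type} (M : NbhdModel P) : Formula P → Set M.S
  | .atom p => M.V p
  | .neg φ => (M.truthSet φ)ᶜ
  | .and φ ψ => M.truthSet φ ∩ M.truthSet ψ
  | .delta φ => {s | M.truthSet φ ∈ M.N s ∨ (M.truthSet φ)ᶜ ∈ M.N s}

/-- Satisfaction: M,s ⊨ φ. -/
def NbhdModel.sat {P : Type} (M : NbhdModel P) (s : M.S) (φ : Formula P) : Prop :=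
  s ∈ M.truthSet φ

/-- Frame property (m): closure under supersets. -/
def SupersetClosed {S : Type} (N : S → Set (Set S)) : Prop :=
  ∀ s : S, ∀ X Y : Set S, X ∈ N s → X ⊆ Y → Y ∈ N s

/-- Frame property (c): closure under binary intersections. -/
def InterClosed {S : Type} (N : S → Set (Set S)) : Prop :=
  ∀ s : S, ∀ X Y : Set S, X ∈ N s → Y ∈ N s → X ∩ Y ∈ N s

/-- Frame property (n): contains the unit. -/
def ContainsUnit {S : Type} (N : S → Set (Set S)) : Prop :=
  ∀ s : S, (Set.univ : Set S) ∈ N s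

/-- Frame property (z): closure under complements. -/
def ComplClosed {S : Type} (N : S → Set (Set S)) : Prop :=
  ∀ s : S, ∀ X : Set S, X ∈ N s → Xᶜ ∈ N s

/-- The supplementation of a neighborhood function:
`N⁺(s) = {X ⊆ S : Y ⊆ X for some Y ∈ N(s)}`. -/
def suppN {S : Type} (N : S → Set (Set S)) (s : S) : Set (Set S) :=
  {X | ∃ Y ∈ N s, Y ⊆ X}

/-- the axiom ΔM, i.e. every instance of Δφ → Δ(φ ∨ ψ) ∨ Δ(¬φ ∨ χ),
is valid on the class of all neighborhood frames satisfying property (m). -/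
theorem deltaM_valid_on_m_frames {P : Type}
    (M : NbhdModel P) (hm : SupersetClosed M.N) (s : M.S) (φ ψ χ : Formula P)
    (h : M.sat s (Formula.delta φ)) :
    M.sat s (Formula.or (Formula.delta (Formula.or φ ψ))
                        (Formula.delta (Formula.or (Formula.neg φ) χ))) := by
  simp only [NbhdModel.sat, NbhdModel.truthSet, Formula.or, Set.mem_setOf_eq,
    Set.mem_compl_iff, Set.mem_inter_iff, not_and, not_not] at h ⊢
  intro h1
  rcases h with h | h
  · exact absurd (Or.inl (hm s _ _ h (fun x hx => by simp [hx]))) h1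
  · exact Or.inl (hm s _ _ h (fun x hx => by simp at hx ⊢; tauto))
end

section
/- The axiom ΔC, i.e. every instance of (Δφ ∧ Δψ) → Δ(φ ∧ ψ), is valid on the class of all neighborhood frames satisfying properties (c) and (z): for every neighborhood model M = ⟨S, N, V⟩ such that each N(s) is closed under binary intersections and closed under complements, every state s, and all formulas φ, ψ, if M,s ⊨ Δφ and M,s ⊨ Δψ then M,s ⊨ Δ(φ ∧ ψ). -/
/-- the axiom ΔC, i.e. every instance of (Δφ ∧ Δψ) → Δ(φ ∧ ψ), is valid
on the class of all neighborhood frames satisfying properties (c) and (z). -/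
theorem deltaC_valid_on_cz_frames {P : Type}
    (M : NbhdModel P) (hc : InterClosed M.N) (hz : ComplClosed M.N)
    (s : M.S) (φ ψ : Formula P)
    (h1 : M.sat s (Formula.delta φ)) (h2 : M.sat s (Formula.delta ψ)) :
    M.sat s (Formula.delta (Formula.and φ ψ)) := by
  have hφ : M.truthSet φ ∈ M.N s := by
    rcases h1 with h | h
    · exact h
    · simpa using hz s _ h
  have hψ : M.truthSet ψ ∈ M.N s := by
    rcases h2 with h | h
    · exact h
    · simpa using hz s _ h
  exact Or.inl (hc s _ _ hφ hψ)
end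

section
/- The axiom ΔC, i.e. every instance of (Δφ ∧ Δψ) → Δ(φ ∧ ψ), is valid on the class of all quasi-filter neighborhood frames, i.e. frames satisfying properties (m) and (c): for every neighborhood model M whose neighborhood function at each state is closed under supersets and under binary intersections, every state s, and all formulas φ, ψ, if M,s ⊨ Δφ and M,s ⊨ Δψ then M,s ⊨ Δ(φ ∧ ψ). -/
/-- the axiom ΔC is valid on the class of all quasi-filter neighborhood
frames, i.e. frames satisfying properties (m) and (c). -/
theorem deltaC_valid_on_quasi_filters {P : Type}
    (M : NbhdModel P) (hm : SupersetClosed M.N) (hc : InterClosed M.N)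
    (s : M.S) (φ ψ : Formula P)
    (h1 : M.sat s (Formula.delta φ)) (h2 : M.sat s (Formula.delta ψ)) :
    M.sat s (Formula.delta (Formula.and φ ψ)) := by

  obtain h1 | h1 := h1 <;> obtain h2 | h2 := h2
  · exact Or.inl (hc s _ _ h1 h2)
  · refine Or.inr (hm s _ _ (hc s _ _ h1 h2) ?_)
    intro x hx; simp only [NbhdModel.truthSet, Set.mem_inter_iff, Set.mem_compl_iff] at *
    tauto
  · refine Or.inr (hm s _ _ (hc s _ _ h1 h2) ?_)
    intro x hx; simp only [NbhdModel.truthSet, Set.mem_inter_iff, Set.mem_compl_iff] at *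
    tauto
  · refine Or.inr (hm s _ _ (hc s _ _ h1 h2) ?_)
    intro x hx; simp only [NbhdModel.truthSet, Set.mem_inter_iff, Set.mem_compl_iff] at *
    tauto
end

section
/- The axiom ΔC is not valid on the class of (cn)-frames: there exist a neighborhood model M = ⟨S, N, V⟩ whose neighborhood function at every state is closed under binary intersections and contains the unit S, a state s, and propositional variables p, q, such that M,s ⊨ Δp and M,s ⊨ Δq but M,s ⊭ Δ(p ∧ q). (A witness: S = {s,t,u}, N(s) = {{s},{s,t},S}, N(t) = N(u) = {S}, V(p) = {s,t}, V(q) = {t,u}.) -/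
/-! Two members of a chain intersect in one of them, so a neighborhood function that is a chain of
sets at every state is closed under intersections. The counterexample puts the chain
`{0} ⊆ {0, 1} ⊆ S` at `0` with `⟦p⟧ = {0, 1}` and `⟦¬q⟧ = {0}`, while `⟦p ∧ q⟧ = {1}` and its
complement `{0, 2}` are missing from the chain. -/

theorem interClosed_of_isChain {S : Type} {N : S → Set (Set S)}
    (hN : ∀ s, IsChain (· ⊆ ·) (N s)) : InterClosed N := by
  intro s X Y hX hY
  rcases (hN s).total hX hY with hXY | hYX
  · rwa [Set.inter_eq_left.mpr hXY]
  · rwa [Set.inter_eq_right.mpr hYX]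

theorem NbhdModel.sat_delta_iff {P : Type} (M : NbhdModel P) (s : M.S) (φ : Formula P) :
    M.sat s (.delta φ) ↔ M.truthSet φ ∈ M.N s ∨ (M.truthSet φ)ᶜ ∈ M.N s :=
  Iff.rfl

namespace CnCounterexample

variable {P : Type}

open Classical in
abbrev model (p q : P) : NbhdModel P where
  S := Fin 3
  nonempty := ⟨0⟩
  N s := if s = 0 then {{0}, {0, 1}, Set.univ} else {Set.univ}
  V r := if r = p then {0, 1} else if r = q then {1, 2} else ∅

theorem isChain_N (p q : P) (s : Fin 3) : IsChain (· ⊆ ·) ((model p q).N s) := by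
  by_cases hs : s = 0
  · simp only [model, if_pos hs]
    refine (IsChain.pair (Set.subset_univ _)).insert fun b hb _ => Or.inl ?_
    rcases hb with rfl | rfl
    · simp
    · exact Set.subset_univ _
  · simp only [model, if_neg hs]
    exact Set.Subsingleton.isChain Set.subsingleton_singleton

theorem containsUnit (p q : P) : ContainsUnit (model p q).N := by
  intro s
  by_cases hs : s = 0 <;> simp [model, hs]

theorem truthSet_p (p q : P) : (model p q).truthSet (.atom p) = {0, 1} := by
  simp [model, NbhdModel.truthSet]

theorem truthSet_q {p q : P} (hpq : p ≠ q) : (model p q).truthSet (.atom q) = {1, 2} := by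
  simp [model, NbhdModel.truthSet, hpq.symm]

theorem truthSet_p_and_q {p q : P} (hpq : p ≠ q) :
    (model p q).truthSet (.and (.atom p) (.atom q)) = {1} := by
  change (model p q).truthSet (.atom p) ∩ (model p q).truthSet (.atom q) = _
  rw [truthSet_p, truthSet_q hpq]
  ext x; fin_cases x <;> simp

end CnCounterexample

open CnCounterexample in
/-- the axiom ΔC is not valid on the class of (cn)-frames: there exist a
(cn)-model, a state s and propositional variables p, q with M,s ⊨ Δp and M,s ⊨ Δq but
M,s ⊭ Δ(p ∧ q). -/
theorem deltaC_not_valid_on_cn_frames {P : Type} (p q : P) (hpq : p ≠ q) :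
    ∃ (M : NbhdModel P) (s : M.S),
      InterClosed M.N ∧ ContainsUnit M.N ∧
      M.sat s (Formula.delta (Formula.atom p)) ∧
      M.sat s (Formula.delta (Formula.atom q)) ∧
      ¬ M.sat s (Formula.delta (Formula.and (Formula.atom p) (Formula.atom q))) := by
  refine ⟨model p q, (0 : Fin 3), interClosed_of_isChain (isChain_N p q), containsUnit p q,
    ?_, ?_, ?_⟩
  · rw [NbhdModel.sat_delta_iff, truthSet_p]
    simp [model]
  · rw [NbhdModel.sat_delta_iff, truthSet_q hpq]
    have hcompl : ({1, 2} : Set (Fin 3))ᶜ = {0} := by ext x; fin_cases x <;> simp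
    simp [model, hcompl]
  · rw [NbhdModel.sat_delta_iff, truthSet_p_and_q hpq]
    have hcompl : ({1} : Set (Fin 3))ᶜ = {0, 2} := by ext x; fin_cases x <;> simp
    simp [model, hcompl, Set.ext_iff, Fin.forall_fin_succ]
end

section
/- The axiom sΔM, i.e. Δφ → Δ(φ ∨ ψ), is not valid on the class of filters, i.e. (mcn)-frames: there exist a neighborhood model M = ⟨S, N, V⟩ whose neighborhood function at every state is closed under supersets, closed under binary intersections, and contains the unit S, a state s, and propositional variables p, q, such that M,s ⊨ Δp but M,s ⊭ Δ(p ∨ q). (A witness: S = {s,t,u}, N(s) = {{t,u},S}, N(t) = N(u) = {S}, V(p) = {s}, V(q) = {t}.) -/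
/-- the axiom sΔM, i.e. Δφ → Δ(φ ∨ ψ), is not valid on the class of
filters, i.e. (mcn)-frames: there exist an (mcn)-model, a state s and propositional
variables p, q with M,s ⊨ Δp but M,s ⊭ Δ(p ∨ q). -/
theorem sDeltaM_not_valid_on_filters {P : Type} (p q : P) (hpq : p ≠ q) :
    ∃ (M : NbhdModel P) (s : M.S),
      SupersetClosed M.N ∧ InterClosed M.N ∧ ContainsUnit M.N ∧
      M.sat s (Formula.delta (Formula.atom p)) ∧
      ¬ M.sat s (Formula.delta (Formula.or (Formula.atom p) (Formula.atom q))) := by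
  classical
  -- core sets: core 0 = {1,2}, core _ = univ
  let core : Fin 3 → Set (Fin 3) := fun s => if s = 0 then {1, 2} else Set.univ
  refine ⟨⟨Fin 3, ⟨0⟩, fun s => {X | core s ⊆ X},
      fun r => if r = p then {0} else if r = q then {1} else ∅⟩, 0, ?_, ?_, ?_, ?_, ?_⟩
  · intro s X Y hX hXY
    exact hX.trans hXY
  · intro s X Y hX hY
    exact Set.subset_inter hX hY
  · intro s
    exact Set.subset_univ _
  · -- Δp: ⟦p⟧ = {0}, complement ⊇ {1,2}
    right
    simp only [NbhdModel.truthSet, if_pos rfl]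
    intro x hx
    simp only [core, if_pos rfl, Set.mem_insert_iff, Set.mem_singleton_iff] at hx
    rcases hx with h | h <;> subst h <;> simp
  · -- ¬Δ(p ∨ q)
    intro h
    simp only [NbhdModel.sat, NbhdModel.truthSet, Formula.or, Set.mem_setOf_eq,
      eq_self_iff_true, if_true, if_neg (Ne.symm hpq)] at h
    have hT : (({0} : Set (Fin 3))ᶜ ∩ ({1} : Set (Fin 3))ᶜ)ᶜ = {0, 1} := by
      ext x; fin_cases x <;> simp
    rw [hT] at h
    have hcore : core 0 = {1, 2} := if_pos rfl
    rcases h with h | h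
    · have := h (show (1:Fin 3) ∈ core 0 by rw [hcore]; simp)
      have h2 := h (show (2:Fin 3) ∈ core 0 by rw [hcore]; simp)
      simp at h2
    · have h2 := h (show (1:Fin 3) ∈ core 0 by rw [hcore]; simp)
      simp at h2
end

section
/- The axiom sΔM, i.e. every instance of Δφ → Δ(φ ∨ ψ), is valid on the class of (mz)-frames: for every neighborhood model M = ⟨S, N, V⟩ such that each N(s) is closed under supersets and closed under complements, every state s, and all formulas φ, ψ, if M,s ⊨ Δφ then M,s ⊨ Δ(φ ∨ ψ). -/
/-- the axiom sΔM, i.e. every instance of Δφ → Δ(φ ∨ ψ), is valid on the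
class of (mz)-frames. -/
theorem sDeltaM_valid_on_mz_frames {P : Type}
    (M : NbhdModel P) (hm : SupersetClosed M.N) (hz : ComplClosed M.N)
    (s : M.S) (φ ψ : Formula P)
    (h : M.sat s (Formula.delta φ)) :
    M.sat s (Formula.delta (Formula.or φ ψ)) := by
  have key : M.truthSet (Formula.or φ ψ) = M.truthSet φ ∪ M.truthSet ψ := by
    simp [Formula.or, NbhdModel.truthSet, Set.compl_inter, compl_compl]
  have hφ : M.truthSet φ ∈ M.N s := by
    rcases h with h | h
    · exact h
    · have := hz s _ h
      rwa [compl_compl] at this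
  left
  rw [key]
  exact hm s _ _ hφ Set.subset_union_left
end

section
/- The system ECZ^Δ is strongly complete with respect to the class of all (cz)-frames: every ECZ^Δ-consistent set of formulas is satisfiable at some state of some neighborhood model whose neighborhood function at every state is closed under binary intersections and closed under complements. -/
/-- `φ` is a substitution instance of a propositional tautology: every Boolean valuation
of formulas that respects `¬` and `∧` (treating atoms and Δ-formulas as atomic) makes
`φ` true. -/
def Tautology {P : Type} (φ : Formula P) : Prop :=
  ∀ v : Formula P → Bool,
    (∀ ψ, v (Formula.neg ψ) = !(v ψ)) →
    (∀ ψ χ, v (Formula.and ψ χ) = (v ψ && v χ)) →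
    v φ = true

/-- Derivability in the system E^Δ (TAUT + ΔEqu + MP + REΔ) extended with the
additional axioms in `Ax`. -/
inductive Deriv {P : Type} (Ax : Set (Formula P)) : Formula P → Prop
  | ax {φ} (h : φ ∈ Ax) : Deriv Ax φ
  | taut {φ} (h : Tautology φ) : Deriv Ax φ
  | equ (φ) : Deriv Ax (Formula.iffF (Formula.delta φ) (Formula.delta (Formula.neg φ)))
  | mp {φ ψ} (h1 : Deriv Ax (Formula.imp φ ψ)) (h2 : Deriv Ax φ) : Deriv Ax ψ
  | re {φ ψ} (h : Deriv Ax (Formula.iffF φ ψ)) :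
      Deriv Ax (Formula.iffF (Formula.delta φ) (Formula.delta ψ))

/-- Derivability of `φ` from the set of premises `Γ` in the system E^Δ + `Ax`. -/
inductive DerivFrom {P : Type} (Ax Γ : Set (Formula P)) : Formula P → Prop
  | mem {φ} (h : φ ∈ Γ) : DerivFrom Ax Γ φ
  | thm {φ} (h : Deriv Ax φ) : DerivFrom Ax Γ φ
  | mp {φ ψ} (h1 : DerivFrom Ax Γ (Formula.imp φ ψ)) (h2 : DerivFrom Ax Γ φ) :
      DerivFrom Ax Γ ψ

/-- `Γ` is consistent in the system E^Δ + `Ax`: no contradiction is derivable from `Γ`. -/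
def Consistent {P : Type} (Ax Γ : Set (Formula P)) : Prop :=
  ¬ ∃ φ : Formula P, DerivFrom Ax Γ φ ∧ DerivFrom Ax Γ (Formula.neg φ)

/-- The axiom ΔM: all instances of Δφ → Δ(φ ∨ ψ) ∨ Δ(¬φ ∨ χ). -/
def AxDeltaM {P : Type} : Set (Formula P) :=
  {f | ∃ φ ψ χ : Formula P,
     f = Formula.imp (Formula.delta φ)
           (Formula.or (Formula.delta (Formula.or φ ψ))
                       (Formula.delta (Formula.or (Formula.neg φ) χ)))}

/-- The axiom ΔC: all instances of (Δφ ∧ Δψ) → Δ(φ ∧ ψ). -/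
def AxDeltaC {P : Type} : Set (Formula P) :=
  {f | ∃ φ ψ : Formula P,
     f = Formula.imp (Formula.and (Formula.delta φ) (Formula.delta ψ))
           (Formula.delta (Formula.and φ ψ))}

/-- The axiom ΔN: Δ⊤. -/
noncomputable def AxDeltaN (P : Type) [Nonempty P] : Set (Formula P) :=
  {Formula.delta (Formula.top P)}

/- STATEMENT 8: the system ECZ^Δ = E^Δ + ΔC is strongly complete with respect to the
class of all (cz)-frames: every ECZ^Δ-consistent set of formulas is satisfiable at some
state of some neighborhood model whose neighborhood function at every state is closed
under binary intersections and closed under complements. -/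

namespace CLAux

variable {P : Type}

open Formula

/-! ### Tautologies -/

lemma taut_I (φ : Formula P) : Tautology (imp φ φ) := by
  intro v hn ha; simp only [imp, hn, ha]; cases v φ <;> rfl

lemma taut_K (φ ψ : Formula P) : Tautology (imp φ (imp ψ φ)) := by
  intro v hn ha; simp only [imp, hn, ha]; cases v φ <;> cases v ψ <;> rfl

lemma taut_S (φ ψ χ : Formula P) :
    Tautology (imp (imp φ (imp ψ χ)) (imp (imp φ ψ) (imp φ χ))) := by
  intro v hn ha; simp only [imp, hn, ha]
  cases v φ <;> cases v ψ <;> cases v χ <;> rfl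

lemma taut_absurd (φ ψ : Formula P) :
    Tautology (imp (imp φ ψ) (imp (imp φ (neg ψ)) (neg φ))) := by
  intro v hn ha; simp only [imp, hn, ha]
  cases v φ <;> cases v ψ <;> rfl

lemma taut_absurd2 (φ ψ : Formula P) :
    Tautology (imp (imp (neg φ) ψ) (imp (imp (neg φ) (neg ψ)) φ)) := by
  intro v hn ha; simp only [imp, hn, ha]
  cases v φ <;> cases v ψ <;> rfl

lemma taut_and_left (φ ψ : Formula P) : Tautology (imp (and φ ψ) φ) := by
  intro v hn ha; simp only [imp, hn, ha]
  cases v φ <;> cases v ψ <;> rfl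

lemma taut_and_right (φ ψ : Formula P) : Tautology (imp (and φ ψ) ψ) := by
  intro v hn ha; simp only [imp, hn, ha]
  cases v φ <;> cases v ψ <;> rfl

lemma taut_and_intro (φ ψ : Formula P) : Tautology (imp φ (imp ψ (and φ ψ))) := by
  intro v hn ha; simp only [imp, hn, ha]
  cases v φ <;> cases v ψ <;> rfl

lemma taut_iff_intro (φ ψ : Formula P) :
    Tautology (imp (imp φ ψ) (imp (imp ψ φ) (iffF φ ψ))) := by
  intro v hn ha; simp only [imp, iffF, hn, ha]
  cases v φ <;> cases v ψ <;> rfl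

lemma taut_iff_mp (φ ψ : Formula P) : Tautology (imp (iffF φ ψ) (imp φ ψ)) := by
  intro v hn ha; simp only [imp, iffF, hn, ha]
  cases v φ <;> cases v ψ <;> rfl

lemma taut_iff_mpr (φ ψ : Formula P) : Tautology (imp (iffF φ ψ) (imp ψ φ)) := by
  intro v hn ha; simp only [imp, iffF, hn, ha]
  cases v φ <;> cases v ψ <;> rfl

/-! ### Basic derivability facts -/

variable {Ax : Set (Formula P)}

lemma Deriv.iff_mp' {φ ψ : Formula P} (h : Deriv Ax (iffF φ ψ)) :
    Deriv Ax (imp φ ψ) :=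
  Deriv.mp (Deriv.taut (taut_iff_mp φ ψ)) h

lemma Deriv.iff_mpr' {φ ψ : Formula P} (h : Deriv Ax (iffF φ ψ)) :
    Deriv Ax (imp ψ φ) :=
  Deriv.mp (Deriv.taut (taut_iff_mpr φ ψ)) h

lemma Deriv.iff_of_imps {φ ψ : Formula P} (h1 : Deriv Ax (imp φ ψ))
    (h2 : Deriv Ax (imp ψ φ)) : Deriv Ax (iffF φ ψ) :=
  Deriv.mp (Deriv.mp (Deriv.taut (taut_iff_intro φ ψ)) h1) h2

lemma derivFrom_mono {Γ Γ' : Set (Formula P)} {φ : Formula P}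
    (h : DerivFrom Ax Γ φ) (hΓ : Γ ⊆ Γ') : DerivFrom Ax Γ' φ := by
  induction h with
  | mem h => exact DerivFrom.mem (hΓ h)
  | thm h => exact DerivFrom.thm h
  | mp _ _ ih1 ih2 => exact DerivFrom.mp ih1 ih2

lemma derivFrom_empty {φ : Formula P} (h : DerivFrom Ax ∅ φ) : Deriv Ax φ := by
  induction h with
  | mem h => exact absurd h (Set.notMem_empty _)
  | thm h => exact h
  | mp _ _ ih1 ih2 => exact Deriv.mp ih1 ih2

/-- Deduction theorem. -/
lemma deduction {Γ : Set (Formula P)} {φ ψ : Formula P}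
    (h : DerivFrom Ax (insert φ Γ) ψ) : DerivFrom Ax Γ (imp φ ψ) := by
  induction h with
  | @mem χ h =>
    rcases h with h | h
    · subst h; exact DerivFrom.thm (Deriv.taut (taut_I χ))
    · exact DerivFrom.mp (DerivFrom.thm (Deriv.taut (taut_K χ φ))) (DerivFrom.mem h)
  | @thm χ h =>
    exact DerivFrom.mp (DerivFrom.thm (Deriv.taut (taut_K χ φ))) (DerivFrom.thm h)
  | @mp χ ξ _ _ ih1 ih2 =>
    exact DerivFrom.mp (DerivFrom.mp (DerivFrom.thm (Deriv.taut (taut_S φ χ ξ))) ih1) ih2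

/-- Compactness: a derivation only uses finitely many premises. -/
lemma derivFrom_finite {Γ : Set (Formula P)} {φ : Formula P}
    (h : DerivFrom Ax Γ φ) :
    ∃ Γ₀ : Set (Formula P), Γ₀.Finite ∧ Γ₀ ⊆ Γ ∧ DerivFrom Ax Γ₀ φ := by
  induction h with
  | @mem χ h =>
    exact ⟨{χ}, Set.finite_singleton _, Set.singleton_subset_iff.2 h,
      DerivFrom.mem rfl⟩
  | @thm χ h => exact ⟨∅, Set.finite_empty, Set.empty_subset _, DerivFrom.thm h⟩
  | @mp χ ξ _ _ ih1 ih2 =>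
    obtain ⟨Γ₁, hf1, hs1, hd1⟩ := ih1
    obtain ⟨Γ₂, hf2, hs2, hd2⟩ := ih2
    exact ⟨Γ₁ ∪ Γ₂, hf1.union hf2, Set.union_subset hs1 hs2,
      DerivFrom.mp (derivFrom_mono hd1 Set.subset_union_left) (derivFrom_mono hd2 Set.subset_union_right)⟩

lemma finset_subset_chain {α : Type*} {c : Set (Set α)}
    (hchain : IsChain (· ⊆ ·) c) (hne : c.Nonempty) (F : Finset α) :
    ↑F ⊆ ⋃₀ c → ∃ t ∈ c, ↑F ⊆ t := by
  classical
  induction F using Finset.induction_on with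
  | empty =>
    intro _
    obtain ⟨t, ht⟩ := hne
    exact ⟨t, ht, by simp⟩
  | @insert a s ha ih =>
    intro hsub
    rw [Finset.coe_insert] at hsub
    obtain ⟨t2, ht2, hst2⟩ := ih (fun x hx => hsub (Set.mem_insert_of_mem a hx))
    obtain ⟨t1, ht1, hat1⟩ := hsub (Set.mem_insert a _)
    rw [Finset.coe_insert]
    rcases eq_or_ne t1 t2 with rfl | hne'
    · exact ⟨t1, ht1, Set.insert_subset hat1 hst2⟩
    rcases hchain ht1 ht2 hne' with h12 | h21
    · exact ⟨t2, ht2, Set.insert_subset (h12 hat1) hst2⟩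
    · exact ⟨t1, ht1, Set.insert_subset hat1 (hst2.trans h21)⟩

lemma finite_subset_chain {α : Type*} {c : Set (Set α)}
    (hchain : IsChain (· ⊆ ·) c) (hne : c.Nonempty) {F : Set α} (hF : F.Finite)
    (hsub : F ⊆ ⋃₀ c) : ∃ t ∈ c, F ⊆ t := by
  obtain ⟨t, htc, hts⟩ := finset_subset_chain hchain hne hF.toFinset
    (by rwa [Set.Finite.coe_toFinset])
  exact ⟨t, htc, by rwa [Set.Finite.coe_toFinset] at hts⟩

/-! ### Maximal consistent sets -/

def MCS (Ax Γ : Set (Formula P)) : Prop :=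
  Consistent Ax Γ ∧ ∀ φ, φ ∉ Γ → ¬ Consistent Ax (insert φ Γ)

lemma MCS.closed {Γ : Set (Formula P)} (h : MCS Ax Γ) {φ : Formula P}
    (hd : DerivFrom Ax Γ φ) : φ ∈ Γ := by
  by_contra hn
  have hc := h.2 φ hn
  simp only [Consistent, not_not] at hc
  obtain ⟨χ, h1, h2⟩ := hc
  exact h.1 ⟨χ, DerivFrom.mp (deduction h1) hd, DerivFrom.mp (deduction h2) hd⟩

lemma MCS.thm_mem {Γ : Set (Formula P)} (h : MCS Ax Γ) {φ : Formula P}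
    (hd : Deriv Ax φ) : φ ∈ Γ := h.closed (DerivFrom.thm hd)

lemma MCS.mp_mem {Γ : Set (Formula P)} (h : MCS Ax Γ) {φ ψ : Formula P}
    (h1 : imp φ ψ ∈ Γ) (h2 : φ ∈ Γ) : ψ ∈ Γ :=
  h.closed (DerivFrom.mp (DerivFrom.mem h1) (DerivFrom.mem h2))

lemma MCS.neg_mem_iff {Γ : Set (Formula P)} (h : MCS Ax Γ) {φ : Formula P} :
    neg φ ∈ Γ ↔ φ ∉ Γ := by
  constructor
  · intro hn hm
    exact h.1 ⟨φ, DerivFrom.mem hm, DerivFrom.mem hn⟩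
  · intro hm
    have hc := h.2 φ hm
    simp only [Consistent, not_not] at hc
    obtain ⟨χ, h1, h2⟩ := hc
    exact h.closed (DerivFrom.mp (DerivFrom.mp
      (DerivFrom.thm (Deriv.taut (taut_absurd φ χ))) (deduction h1)) (deduction h2))

lemma MCS.and_mem_iff {Γ : Set (Formula P)} (h : MCS Ax Γ) {φ ψ : Formula P} :
    and φ ψ ∈ Γ ↔ φ ∈ Γ ∧ ψ ∈ Γ := by
  constructor
  · intro hm
    exact ⟨h.mp_mem (h.thm_mem (Deriv.taut (taut_and_left φ ψ))) hm,
      h.mp_mem (h.thm_mem (Deriv.taut (taut_and_right φ ψ))) hm⟩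
  · rintro ⟨h1, h2⟩
    exact h.mp_mem (h.mp_mem (h.thm_mem (Deriv.taut (taut_and_intro φ ψ))) h1) h2

/-- Lindenbaum's lemma. -/
lemma lindenbaum {Γ : Set (Formula P)} (h : Consistent Ax Γ) :
    ∃ Γ', Γ ⊆ Γ' ∧ MCS Ax Γ' := by
  obtain ⟨m, hm, hmax⟩ := zorn_subset_nonempty {Δ | Consistent Ax Δ}
    (fun c hc hchain hne => by
      refine ⟨⋃₀ c, ?_, fun s hs => Set.subset_sUnion_of_mem hs⟩
      rintro ⟨φ, h1, h2⟩
      obtain ⟨Γ₁, hf1, hs1, hd1⟩ := derivFrom_finite h1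
      obtain ⟨Γ₂, hf2, hs2, hd2⟩ := derivFrom_finite h2
      obtain ⟨t, htc, hts⟩ := finite_subset_chain hchain hne (hf1.union hf2)
        (Set.union_subset hs1 hs2)
      exact hc htc ⟨φ, derivFrom_mono hd1 (Set.subset_union_left.trans hts),
        derivFrom_mono hd2 (Set.subset_union_right.trans hts)⟩) Γ h
  exact ⟨m, hm, hmax.1, fun φ hφ hconsis =>
    hφ (hmax.2 hconsis (Set.subset_insert φ m) (Set.mem_insert φ m))⟩

/-- If two formulas have the same proof set, they are provably equivalent. -/
lemma deriv_iff_of_proofSet_eq {φ ψ : Formula P}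
    (h : ∀ Δ : Set (Formula P), MCS Ax Δ → (φ ∈ Δ ↔ ψ ∈ Δ)) :
    Deriv Ax (iffF φ ψ) := by
  have key : ∀ χ ξ : Formula P,
      (∀ Δ : Set (Formula P), MCS Ax Δ → χ ∈ Δ → ξ ∈ Δ) → Deriv Ax (imp χ ξ) := by
    intro χ ξ hall
    by_contra hnd
    have hcons : Consistent Ax (insert (neg ξ) {χ}) := by
      rintro ⟨ρ, h1, h2⟩
      have d1 : DerivFrom Ax ({χ} : Set (Formula P)) (imp (neg ξ) ρ) := deduction h1
      have d2 : DerivFrom Ax ({χ} : Set (Formula P)) (imp (neg ξ) (neg ρ)) :=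
        deduction h2
      have d3 : DerivFrom Ax ({χ} : Set (Formula P)) ξ :=
        DerivFrom.mp (DerivFrom.mp
          (DerivFrom.thm (Deriv.taut (taut_absurd2 ξ ρ))) d1) d2
      have : DerivFrom Ax (∅ : Set (Formula P)) (imp χ ξ) := by
        have := deduction (φ := χ) (ψ := ξ) (Γ := ∅)
          (derivFrom_mono d3 (by simp))
        exact this
      exact hnd (derivFrom_empty this)
    obtain ⟨Δ, hΔs, hΔ⟩ := lindenbaum hcons
    have hχ : χ ∈ Δ := hΔs (Set.mem_insert_of_mem _ rfl)
    have hnξ : neg ξ ∈ Δ := hΔs (Set.mem_insert _ _)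
    exact (hΔ.neg_mem_iff.1 hnξ) (hall Δ hΔ hχ)
  exact Deriv.iff_of_imps
    (key φ ψ (fun Δ hΔ => (h Δ hΔ).1))
    (key ψ φ (fun Δ hΔ => (h Δ hΔ).2))

/-! ### The canonical model -/

/-- delta is preserved by provable equivalence, inside an MCS. -/
lemma MCS.delta_congr {Γ : Set (Formula P)} (h : MCS Ax Γ) {φ ψ : Formula P}
    (he : Deriv Ax (iffF φ ψ)) (hm : delta φ ∈ Γ) : delta ψ ∈ Γ :=
  h.mp_mem (h.thm_mem (Deriv.iff_mp' (Deriv.re he))) hm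

lemma MCS.delta_neg_iff {Γ : Set (Formula P)} (h : MCS Ax Γ) {φ : Formula P} :
    delta (neg φ) ∈ Γ ↔ delta φ ∈ Γ :=
  ⟨fun hm => h.mp_mem (h.thm_mem (Deriv.iff_mpr' (Deriv.equ φ))) hm,
   fun hm => h.mp_mem (h.thm_mem (Deriv.iff_mp' (Deriv.equ φ))) hm⟩

variable (Ax) in
/-- The states of the canonical model: maximal consistent sets. -/
def CanState : Type := {Δ : Set (Formula P) // MCS Ax Δ}

variable (Ax) in
/-- The proof set of a formula. -/
def pSet (φ : Formula P) : Set (CanState Ax) := {Δ : CanState Ax | φ ∈ Δ.1}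

lemma pSet_neg (φ : Formula P) : pSet Ax (neg φ) = (pSet Ax φ)ᶜ := by
  ext Δ
  exact Δ.2.neg_mem_iff

lemma pSet_and (φ ψ : Formula P) : pSet Ax (and φ ψ) = pSet Ax φ ∩ pSet Ax ψ := by
  ext Δ
  exact Δ.2.and_mem_iff

lemma pSet_eq_iff_deriv {φ ψ : Formula P} (_hne : Nonempty (CanState Ax)) :
    pSet Ax φ = pSet Ax ψ → Deriv Ax (iffF φ ψ) := by
  intro he
  apply deriv_iff_of_proofSet_eq
  intro Δ hΔ
  have := Set.ext_iff.1 he ⟨Δ, hΔ⟩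
  exact this

variable (Ax) in
/-- The canonical neighborhood function. -/
def canN (s : CanState Ax) : Set (Set (CanState Ax)) :=
  {X | ∃ φ : Formula P, delta φ ∈ s.1 ∧ (X = pSet Ax φ ∨ X = (pSet Ax φ)ᶜ)}

lemma mem_canN_iff {s : CanState Ax} {X : Set (CanState Ax)} :
    X ∈ canN Ax s ↔ ∃ φ : Formula P, delta φ ∈ s.1 ∧ X = pSet Ax φ := by
  constructor
  · rintro ⟨φ, hd, rfl | rfl⟩
    · exact ⟨φ, hd, rfl⟩
    · exact ⟨neg φ, s.2.delta_neg_iff.2 hd, (pSet_neg φ).symm⟩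
  · rintro ⟨φ, hd, rfl⟩
    exact ⟨φ, hd, Or.inl rfl⟩

lemma canN_inter (hC : AxDeltaC ⊆ Ax) : InterClosed (canN Ax) := by
  intro s X Y hX hY
  obtain ⟨φ, hdφ, rfl⟩ := mem_canN_iff.1 hX
  obtain ⟨ψ, hdψ, rfl⟩ := mem_canN_iff.1 hY
  refine mem_canN_iff.2 ⟨and φ ψ, ?_, (pSet_and φ ψ).symm⟩
  have hc : imp (Formula.and (delta φ) (delta ψ)) (delta (and φ ψ)) ∈ s.1 :=
    s.2.thm_mem (Deriv.ax (hC ⟨φ, ψ, rfl⟩))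
  exact s.2.mp_mem hc (s.2.and_mem_iff.2 ⟨hdφ, hdψ⟩)

lemma canN_compl : ComplClosed (canN Ax) := by
  rintro s X ⟨φ, hd, rfl | rfl⟩
  · exact ⟨φ, hd, Or.inr rfl⟩
  · exact ⟨φ, hd, Or.inl (compl_compl _)⟩

/-- The key property of the canonical neighborhood function. -/
lemma canN_delta {s : CanState Ax} {φ : Formula P} :
    (pSet Ax φ ∈ canN Ax s ∨ (pSet Ax φ)ᶜ ∈ canN Ax s) ↔ delta φ ∈ s.1 := by
  have hne : Nonempty (CanState Ax) := ⟨s⟩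
  constructor
  · rintro (hX | hX)
    · obtain ⟨ψ, hd, he⟩ := mem_canN_iff.1 hX
      have h := pSet_eq_iff_deriv hne he
      exact s.2.delta_congr (Deriv.iff_of_imps (Deriv.iff_mpr' h) (Deriv.iff_mp' h)) hd
    · obtain ⟨ψ, hd, he⟩ := mem_canN_iff.1 hX
      rw [← pSet_neg] at he
      have h := pSet_eq_iff_deriv hne he
      exact s.2.delta_neg_iff.1
        (s.2.delta_congr (Deriv.iff_of_imps (Deriv.iff_mpr' h) (Deriv.iff_mp' h)) hd)
  · intro hd
    exact Or.inl (mem_canN_iff.2 ⟨φ, hd, rfl⟩)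

end CLAux

/-- STATEMENT 8 proof -/
theorem ECZ_strongly_complete {P : Type} [Nonempty P]
    (Γ : Set (Formula P)) (hcon : Consistent AxDeltaC Γ) :
    ∃ (M : NbhdModel P) (s : M.S),
      InterClosed M.N ∧ ComplClosed M.N ∧ ∀ φ ∈ Γ, M.sat s φ := by
  obtain ⟨Γ', hΓ', hmcs⟩ := CLAux.lindenbaum hcon
  let s0 : CLAux.CanState (AxDeltaC (P := P)) := ⟨Γ', hmcs⟩
  let M : NbhdModel P :=
    { S := CLAux.CanState (AxDeltaC (P := P))
      nonempty := ⟨s0⟩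
      N := CLAux.canN AxDeltaC
      V := fun p => CLAux.pSet AxDeltaC (Formula.atom p) }
  have truth : ∀ φ : Formula P, M.truthSet φ = CLAux.pSet AxDeltaC φ := by
    intro φ
    induction φ with
    | atom p => rfl
    | neg φ ih =>
      show (M.truthSet φ)ᶜ = _
      rw [ih, CLAux.pSet_neg]
    | and φ ψ ih1 ih2 =>
      show M.truthSet φ ∩ M.truthSet ψ = _
      rw [ih1, ih2, CLAux.pSet_and]
    | delta φ ih =>
      ext s
      show (M.truthSet φ ∈ CLAux.canN AxDeltaC s ∨
        (M.truthSet φ)ᶜ ∈ CLAux.canN AxDeltaC s) ↔ _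
      rw [ih]
      exact CLAux.canN_delta
  refine ⟨M, s0, CLAux.canN_inter (le_refl _), CLAux.canN_compl, fun φ hφ => ?_⟩
  show s0 ∈ M.truthSet φ
  rw [truth φ]
  exact hΓ' hφ
end

section
/- The system EN^Δ is strongly complete with respect to the class of all (n)-frames and also with respect to the class of all (nz)-frames: every EN^Δ-consistent set of formulas is satisfiable at some state of some neighborhood model whose neighborhood function at every state contains the unit S and is closed under complements (hence in particular contains the unit). -/
/-!
The canonical model has the maximal consistent sets as states, and at a state `w` its
neighborhoods are the proof sets `|ψ|` and their complements for `Δψ ∈ w`; it is closed under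
complements by construction. For the truth lemma one needs `|χ| ∈ N(w) ↔ Δχ ∈ w`: two
formulas with equal proof sets are provably equivalent, so REΔ transfers `Δ` between them,
and ΔEqu covers the case `|χ| = |ψ|ᶜ = |¬ψ|`. Finally ΔN gives `Δ⊤ ∈ w` with `|⊤| = S`.
-/

open Formula

variable {P : Type}

namespace Tautology

theorem imp_self (φ : Formula P) : Tautology (imp φ φ) := by
  intro v hn ha; simp only [imp, hn, ha]; cases v φ <;> rfl

theorem imp_intro (φ ψ : Formula P) : Tautology (imp ψ (imp φ ψ)) := by
  intro v hn ha; simp only [imp, hn, ha]; cases v φ <;> cases v ψ <;> rfl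

theorem imp_distrib (φ χ ψ : Formula P) :
    Tautology (imp (imp φ (imp χ ψ)) (imp (imp φ χ) (imp φ ψ))) := by
  intro v hn ha; simp only [imp, hn, ha]; cases v φ <;> cases v χ <;> cases v ψ <;> rfl

theorem neg_intro (φ ψ : Formula P) :
    Tautology (imp (imp φ ψ) (imp (imp φ (neg ψ)) (neg φ))) := by
  intro v hn ha; simp only [imp, hn, ha]; cases v φ <;> cases v ψ <;> rfl

theorem of_neg_neg (φ : Formula P) : Tautology (imp (neg (neg φ)) φ) := by
  intro v hn ha; simp only [imp, hn, ha]; cases v φ <;> rfl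

theorem and_left (φ ψ : Formula P) : Tautology (imp (Formula.and φ ψ) φ) := by
  intro v hn ha; simp only [imp, hn, ha]; cases v φ <;> cases v ψ <;> rfl

theorem and_right (φ ψ : Formula P) : Tautology (imp (Formula.and φ ψ) ψ) := by
  intro v hn ha; simp only [imp, hn, ha]; cases v φ <;> cases v ψ <;> rfl

theorem and_intro (φ ψ : Formula P) : Tautology (imp φ (imp ψ (Formula.and φ ψ))) := by
  intro v hn ha; simp only [imp, hn, ha]; cases v φ <;> cases v ψ <;> rfl

theorem top (P : Type) [Nonempty P] : Tautology (Formula.top P) := by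
  intro v hn ha; simp only [Formula.top, Formula.or, hn, ha]
  cases v (atom (Classical.arbitrary P)) <;> rfl

end Tautology

namespace DerivFrom

variable {Ax Γ Γ' : Set (Formula P)}

theorem mono (h : Γ ⊆ Γ') {φ : Formula P} (hφ : DerivFrom Ax Γ φ) : DerivFrom Ax Γ' φ := by
  induction hφ with
  | mem hmem => exact .mem (h hmem)
  | thm hthm => exact .thm hthm
  | mp _ _ ih₁ ih₂ => exact .mp ih₁ ih₂

theorem taut {φ : Formula P} (h : Tautology φ) : DerivFrom Ax Γ φ := .thm (.taut h)

theorem deduction {φ ψ : Formula P} (h : DerivFrom Ax (insert φ Γ) ψ) :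
    DerivFrom Ax Γ (imp φ ψ) := by
  induction h with
  | @mem χ hmem =>
    rcases hmem with rfl | hmem
    · exact taut (Tautology.imp_self _)
    · exact .mp (taut (Tautology.imp_intro φ χ)) (.mem hmem)
  | @thm χ hthm => exact .mp (taut (Tautology.imp_intro φ χ)) (.thm hthm)
  | @mp χ θ _ _ ih₁ ih₂ => exact .mp (.mp (taut (Tautology.imp_distrib φ χ θ)) ih₁) ih₂

theorem deriv_of_empty {φ : Formula P} (h : DerivFrom Ax ∅ φ) : Deriv Ax φ := by
  induction h with
  | mem hmem => exact absurd hmem (Set.notMem_empty _)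
  | thm hthm => exact hthm
  | mp _ _ ih₁ ih₂ => exact .mp ih₁ ih₂

theorem exists_mem_of_directedOn {c : Set (Set (Formula P))} (hc : DirectedOn (· ⊆ ·) c)
    (hne : c.Nonempty) {φ : Formula P} (h : DerivFrom Ax (⋃₀ c) φ) :
    ∃ t ∈ c, DerivFrom Ax t φ := by
  induction h with
  | mem hmem => obtain ⟨t, ht, hφ⟩ := hmem; exact ⟨t, ht, .mem hφ⟩
  | thm hthm => obtain ⟨t, ht⟩ := hne; exact ⟨t, ht, .thm hthm⟩
  | mp _ _ ih₁ ih₂ =>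
    obtain ⟨t₁, ht₁, hd₁⟩ := ih₁
    obtain ⟨t₂, ht₂, hd₂⟩ := ih₂
    obtain ⟨t, ht, h₁, h₂⟩ := hc t₁ ht₁ t₂ ht₂
    exact ⟨t, ht, .mp (hd₁.mono h₁) (hd₂.mono h₂)⟩

end DerivFrom

namespace Consistent

variable {Ax Γ : Set (Formula P)}

theorem derivFrom_neg_of_not_insert {φ : Formula P} (h : ¬ Consistent Ax (insert φ Γ)) :
    DerivFrom Ax Γ (neg φ) := by
  obtain ⟨ψ, h₁, h₂⟩ := not_not.mp h
  exact .mp (.mp (.taut (Tautology.neg_intro φ ψ)) h₁.deduction) h₂.deduction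

theorem insert_or_insert_neg (h : Consistent Ax Γ) (φ : Formula P) :
    Consistent Ax (insert φ Γ) ∨ Consistent Ax (insert (neg φ) Γ) := by
  by_contra! hc
  exact h ⟨neg φ, derivFrom_neg_of_not_insert hc.1, derivFrom_neg_of_not_insert hc.2⟩

theorem sUnion_of_directedOn {c : Set (Set (Formula P))} (hc : DirectedOn (· ⊆ ·) c)
    (hne : c.Nonempty) (hcon : ∀ t ∈ c, Consistent Ax t) : Consistent Ax (⋃₀ c) := by
  rintro ⟨φ, h₁, h₂⟩
  obtain ⟨t₁, ht₁, hd₁⟩ := DerivFrom.exists_mem_of_directedOn hc hne h₁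
  obtain ⟨t₂, ht₂, hd₂⟩ := DerivFrom.exists_mem_of_directedOn hc hne h₂
  obtain ⟨t, ht, h₁, h₂⟩ := hc t₁ ht₁ t₂ ht₂
  exact hcon t ht ⟨φ, hd₁.mono h₁, hd₂.mono h₂⟩

end Consistent

def MaximalConsistent (Ax Γ : Set (Formula P)) : Prop :=
  Consistent Ax Γ ∧ ∀ φ : Formula P, φ ∈ Γ ∨ neg φ ∈ Γ

theorem Consistent.exists_maximalConsistent_superset {Ax Γ : Set (Formula P)}
    (h : Consistent Ax Γ) : ∃ w, Γ ⊆ w ∧ MaximalConsistent Ax w := by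
  obtain ⟨w, hΓw, hw, hmax⟩ := zorn_subset_nonempty {w | Consistent Ax w}
    (fun c hcon hc hne => ⟨⋃₀ c, Consistent.sUnion_of_directedOn hc.directedOn hne hcon,
      fun _ => Set.subset_sUnion_of_mem⟩) Γ h
  refine ⟨w, hΓw, hw, fun φ => ?_⟩
  rcases hw.insert_or_insert_neg φ with hcon | hcon
  · exact .inl (hmax hcon (Set.subset_insert _ _) (Set.mem_insert _ _))
  · exact .inr (hmax hcon (Set.subset_insert _ _) (Set.mem_insert _ _))

namespace MaximalConsistent

variable {Ax Γ : Set (Formula P)}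

theorem mem_of_derivFrom (hΓ : MaximalConsistent Ax Γ) {φ : Formula P}
    (h : DerivFrom Ax Γ φ) : φ ∈ Γ :=
  (hΓ.2 φ).resolve_right fun hneg => hΓ.1 ⟨φ, h, .mem hneg⟩

theorem mem_of_deriv (hΓ : MaximalConsistent Ax Γ) {φ : Formula P} (h : Deriv Ax φ) : φ ∈ Γ :=
  hΓ.mem_of_derivFrom (.thm h)

theorem neg_mem_iff (hΓ : MaximalConsistent Ax Γ) {φ : Formula P} : neg φ ∈ Γ ↔ φ ∉ Γ :=
  ⟨fun hneg hφ => hΓ.1 ⟨φ, .mem hφ, .mem hneg⟩, (hΓ.2 φ).resolve_left⟩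

theorem and_mem_iff (hΓ : MaximalConsistent Ax Γ) {φ ψ : Formula P} :
    Formula.and φ ψ ∈ Γ ↔ φ ∈ Γ ∧ ψ ∈ Γ := by
  constructor
  · intro h
    exact ⟨hΓ.mem_of_derivFrom (.mp (.taut (Tautology.and_left φ ψ)) (.mem h)),
      hΓ.mem_of_derivFrom (.mp (.taut (Tautology.and_right φ ψ)) (.mem h))⟩
  · rintro ⟨hφ, hψ⟩
    exact hΓ.mem_of_derivFrom (.mp (.mp (.taut (Tautology.and_intro φ ψ)) (.mem hφ)) (.mem hψ))

theorem iffF_mem_iff (hΓ : MaximalConsistent Ax Γ) {φ ψ : Formula P} :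
    iffF φ ψ ∈ Γ ↔ (φ ∈ Γ ↔ ψ ∈ Γ) := by
  simp only [iffF, imp, hΓ.and_mem_iff, hΓ.neg_mem_iff]
  tauto

theorem mem_iff_of_deriv_iffF (hΓ : MaximalConsistent Ax Γ) {φ ψ : Formula P}
    (h : Deriv Ax (iffF φ ψ)) : φ ∈ Γ ↔ ψ ∈ Γ :=
  hΓ.iffF_mem_iff.mp (hΓ.mem_of_deriv h)

theorem delta_neg_mem_iff (hΓ : MaximalConsistent Ax Γ) {φ : Formula P} :
    delta (neg φ) ∈ Γ ↔ delta φ ∈ Γ :=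
  (hΓ.mem_iff_of_deriv_iffF (.equ φ)).symm

end MaximalConsistent

theorem deriv_of_forall_maximalConsistent {Ax : Set (Formula P)} {φ : Formula P}
    (h : ∀ w, MaximalConsistent Ax w → φ ∈ w) : Deriv Ax φ := by
  by_cases hcon : Consistent Ax (insert (neg φ) ∅)
  · obtain ⟨w, hsub, hw⟩ := hcon.exists_maximalConsistent_superset
    exact absurd (h w hw) (hw.neg_mem_iff.mp (hsub (Set.mem_insert _ _)))
  · exact .mp (.taut (Tautology.of_neg_neg φ))
      (Consistent.derivFrom_neg_of_not_insert hcon).deriv_of_empty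

namespace Canonical

def State (Ax : Set (Formula P)) : Type := {w : Set (Formula P) // MaximalConsistent Ax w}

def proofSet (Ax : Set (Formula P)) (φ : Formula P) : Set (State Ax) := {s | φ ∈ s.1}

variable {Ax : Set (Formula P)}

theorem proofSet_neg (φ : Formula P) : proofSet Ax (neg φ) = (proofSet Ax φ)ᶜ :=
  Set.ext fun s => s.2.neg_mem_iff

theorem proofSet_and (φ ψ : Formula P) :
    proofSet Ax (Formula.and φ ψ) = proofSet Ax φ ∩ proofSet Ax ψ :=
  Set.ext fun s => s.2.and_mem_iff

theorem deriv_iffF_of_proofSet_eq {φ ψ : Formula P} (h : proofSet Ax φ = proofSet Ax ψ) :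
    Deriv Ax (iffF φ ψ) :=
  deriv_of_forall_maximalConsistent fun w hw => hw.iffF_mem_iff.mpr (Set.ext_iff.mp h ⟨w, hw⟩)

def nbhd (Ax : Set (Formula P)) (s : State Ax) : Set (Set (State Ax)) :=
  {X | ∃ ψ, delta ψ ∈ s.1 ∧ (X = proofSet Ax ψ ∨ X = (proofSet Ax ψ)ᶜ)}

theorem proofSet_mem_nbhd_iff {s : State Ax} {χ : Formula P} :
    proofSet Ax χ ∈ nbhd Ax s ↔ delta χ ∈ s.1 := by
  refine ⟨?_, fun h => ⟨χ, h, .inl rfl⟩⟩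
  rintro ⟨ψ, hψ, heq | heq⟩
  · exact (s.2.mem_iff_of_deriv_iffF (.re (deriv_iffF_of_proofSet_eq heq))).mpr hψ
  · rw [← proofSet_neg] at heq
    exact (s.2.mem_iff_of_deriv_iffF (.re (deriv_iffF_of_proofSet_eq heq))).mpr
      (s.2.delta_neg_mem_iff.mpr hψ)

theorem complClosed_nbhd : ComplClosed (nbhd Ax) := by
  rintro s X ⟨ψ, hψ, rfl | rfl⟩
  · exact ⟨ψ, hψ, .inr rfl⟩
  · exact ⟨ψ, hψ, .inl (compl_compl _)⟩

theorem containsUnit_nbhd [Nonempty P] (hAx : AxDeltaN P ⊆ Ax) : ContainsUnit (nbhd Ax) := by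
  intro s
  have htop : proofSet Ax (Formula.top P) = Set.univ :=
    Set.eq_univ_of_forall fun t => t.2.mem_of_deriv (.taut (Tautology.top P))
  rw [← htop, proofSet_mem_nbhd_iff]
  exact s.2.mem_of_deriv (.ax (hAx (Set.mem_singleton _)))

abbrev model (Ax : Set (Formula P)) (hne : Nonempty (State Ax)) : NbhdModel P where
  S := State Ax
  nonempty := hne
  N := nbhd Ax
  V p := proofSet Ax (atom p)

theorem truthSet_model (hne : Nonempty (State Ax)) (φ : Formula P) :
    (model Ax hne).truthSet φ = proofSet Ax φ := by
  induction φ with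
  | atom p => rfl
  | neg φ ih => rw [NbhdModel.truthSet, ih, proofSet_neg]
  | and φ ψ ih₁ ih₂ => rw [NbhdModel.truthSet, ih₁, ih₂, proofSet_and]
  | delta φ ih =>
    ext s
    simp only [NbhdModel.truthSet, ih, ← proofSet_neg, Set.mem_ofPred_eq, proofSet_mem_nbhd_iff,
      s.2.delta_neg_mem_iff, or_self]
    rfl

end Canonical

/-- the system EN^Δ = E^Δ + ΔN is strongly complete with respect to the
class of all (n)-frames and also with respect to the class of all (nz)-frames: every
EN^Δ-consistent set of formulas is satisfiable at some state of some neighborhood model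
whose neighborhood function at every state contains the unit and is closed under
complements. -/
theorem EN_strongly_complete {P : Type} [Nonempty P]
    (Γ : Set (Formula P)) (hcon : Consistent (AxDeltaN P) Γ) :
    ∃ (M : NbhdModel P) (s : M.S),
      ContainsUnit M.N ∧ ComplClosed M.N ∧ ∀ φ ∈ Γ, M.sat s φ := by
  obtain ⟨w, hΓw, hw⟩ := hcon.exists_maximalConsistent_superset
  let s : Canonical.State (AxDeltaN P) := ⟨w, hw⟩
  refine ⟨Canonical.model _ ⟨s⟩, s, Canonical.containsUnit_nbhd subset_rfl,
    Canonical.complClosed_nbhd, fun φ hφ => ?_⟩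
  rw [NbhdModel.sat, Canonical.truthSet_model]
  exact hΓw hφ
end

section
/- Truth lemma for canonical models of systems including ΔM: let Λ be a proof system extending M^Δ and let M^Λ = ⟨S^Λ, N^Λ, V^Λ⟩ be any canonical neighborhood model for Λ. Then for every formula φ and every s ∈ S^Λ, M^Λ,s ⊨ φ if and only if φ ∈ s; that is, ⟦φ⟧^{M^Λ} = |φ|. -/
/-- A proof system of contingency logic, given by its set of theorems: it contains all
propositional tautologies and is closed under modus ponens and the rule REΔ. -/
structure Sys (P : Type) where
  thm : Set (Formula P)
  taut : ∀ φ : Formula P, Tautology φ → φ ∈ thm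
  mp : ∀ φ ψ : Formula P, Formula.imp φ ψ ∈ thm → φ ∈ thm → ψ ∈ thm
  re : ∀ φ ψ : Formula P, Formula.iffF φ ψ ∈ thm →
         Formula.iffF (Formula.delta φ) (Formula.delta ψ) ∈ thm

/-- The system contains the axiom ΔEqu: Δφ ↔ Δ¬φ. -/
def HasDeltaEqu {P : Type} (Λ : Sys P) : Prop :=
  ∀ φ : Formula P,
    Formula.iffF (Formula.delta φ) (Formula.delta (Formula.neg φ)) ∈ Λ.thm

/-- The system contains the axiom ΔM: Δφ → Δ(φ ∨ ψ) ∨ Δ(¬φ ∨ χ). -/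
def HasDeltaM {P : Type} (Λ : Sys P) : Prop :=
  ∀ φ ψ χ : Formula P,
    Formula.imp (Formula.delta φ)
      (Formula.or (Formula.delta (Formula.or φ ψ))
                  (Formula.delta (Formula.or (Formula.neg φ) χ))) ∈ Λ.thm

/-- The system contains the axiom ΔC: (Δφ ∧ Δψ) → Δ(φ ∧ ψ). -/
def HasDeltaC {P : Type} (Λ : Sys P) : Prop :=
  ∀ φ ψ : Formula P,
    Formula.imp (Formula.and (Formula.delta φ) (Formula.delta ψ))
      (Formula.delta (Formula.and φ ψ)) ∈ Λ.thm

/-- Derivability of `φ` from premises `Γ` in the system `Λ`. -/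
inductive SDerivFrom {P : Type} (Λ : Sys P) (Γ : Set (Formula P)) : Formula P → Prop
  | mem {φ} (h : φ ∈ Γ) : SDerivFrom Λ Γ φ
  | thm {φ} (h : φ ∈ Λ.thm) : SDerivFrom Λ Γ φ
  | mp {φ ψ} (h1 : SDerivFrom Λ Γ (Formula.imp φ ψ)) (h2 : SDerivFrom Λ Γ φ) :
      SDerivFrom Λ Γ ψ

/-- `Γ` is Λ-consistent. -/
def SConsistent {P : Type} (Λ : Sys P) (Γ : Set (Formula P)) : Prop :=
  ¬ ∃ φ : Formula P, SDerivFrom Λ Γ φ ∧ SDerivFrom Λ Γ (Formula.neg φ)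

/-- `s` is a maximal Λ-consistent set of formulas. -/
def MCS {P : Type} (Λ : Sys P) (s : Set (Formula P)) : Prop :=
  SConsistent Λ s ∧ ∀ φ : Formula P, φ ∈ s ∨ Formula.neg φ ∈ s

/-- The proof set |φ| = {s ∈ S^Λ : φ ∈ s}, where S^Λ is the set of maximal
Λ-consistent sets. -/
def proofSet {P : Type} (Λ : Sys P) (φ : Formula P) :
    Set {s : Set (Formula P) // MCS Λ s} :=
  {s | φ ∈ s.val}

/-- The neighborhood function of the minimal canonical model:
N₀^Λ(s) = { |φ| : Δ(φ ∨ ψ) ∈ s for every formula ψ }. -/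
def minN {P : Type} (Λ : Sys P) (s : {s : Set (Formula P) // MCS Λ s}) :
    Set (Set {s : Set (Formula P) // MCS Λ s}) :=
  {X | ∃ φ : Formula P,
     X = proofSet Λ φ ∧ ∀ ψ : Formula P, Formula.delta (Formula.or φ ψ) ∈ s.val}

section Aux

variable {P : Type} (Λ : Sys P)

lemma mcs_closed {s : Set (Formula P)} (hs : MCS Λ s) {φ : Formula P}
    (h : SDerivFrom Λ s φ) : φ ∈ s := by
  by_contra hφ
  rcases hs.2 φ with h1 | h1
  · exact hφ h1
  · exact hs.1 ⟨φ, h, SDerivFrom.mem h1⟩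

lemma mcs_mp {s : Set (Formula P)} (hs : MCS Λ s) {φ ψ : Formula P}
    (h : Formula.imp φ ψ ∈ Λ.thm) (hφ : φ ∈ s) : ψ ∈ s :=
  mcs_closed Λ hs (SDerivFrom.mp (SDerivFrom.thm h) (SDerivFrom.mem hφ))

lemma mcs_neg {s : Set (Formula P)} (hs : MCS Λ s) (φ : Formula P) :
    Formula.neg φ ∈ s ↔ φ ∉ s := by
  constructor
  · intro hn hφ
    exact hs.1 ⟨φ, SDerivFrom.mem hφ, SDerivFrom.mem hn⟩
  · intro hφ
    rcases hs.2 φ with h | h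
    · exact absurd h hφ
    · exact h

lemma taut_and_left (φ ψ : Formula P) :
    Tautology (Formula.imp (Formula.and φ ψ) φ) := by
  intro v hn ha
  simp only [Formula.imp, hn, ha]
  cases v φ <;> cases v ψ <;> rfl

lemma taut_and_right (φ ψ : Formula P) :
    Tautology (Formula.imp (Formula.and φ ψ) ψ) := by
  intro v hn ha
  simp only [Formula.imp, hn, ha]
  cases v φ <;> cases v ψ <;> rfl

lemma taut_and_intro (φ ψ : Formula P) :
    Tautology (Formula.imp φ (Formula.imp ψ (Formula.and φ ψ))) := by
  intro v hn ha
  simp only [Formula.imp, hn, ha]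
  cases v φ <;> cases v ψ <;> rfl

lemma taut_or_elim (φ ψ : Formula P) :
    Tautology (Formula.imp (Formula.or φ ψ) (Formula.imp (Formula.neg φ) ψ)) := by
  intro v hn ha
  simp only [Formula.imp, Formula.or, hn, ha]
  cases v φ <;> cases v ψ <;> rfl

lemma taut_or_self (φ : Formula P) :
    Tautology (Formula.iffF (Formula.or φ φ) φ) := by
  intro v hn ha
  simp only [Formula.iffF, Formula.imp, Formula.or, hn, ha]
  cases v φ <;> rfl

lemma taut_iff_mp (φ ψ : Formula P) :
    Tautology (Formula.imp (Formula.iffF φ ψ) (Formula.imp φ ψ)) := by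
  intro v hn ha
  simp only [Formula.iffF, Formula.imp, hn, ha]
  cases v φ <;> cases v ψ <;> rfl

lemma taut_iff_mpr (φ ψ : Formula P) :
    Tautology (Formula.imp (Formula.iffF φ ψ) (Formula.imp ψ φ)) := by
  intro v hn ha
  simp only [Formula.iffF, Formula.imp, hn, ha]
  cases v φ <;> cases v ψ <;> rfl

lemma mcs_and {s : Set (Formula P)} (hs : MCS Λ s) (φ ψ : Formula P) :
    Formula.and φ ψ ∈ s ↔ φ ∈ s ∧ ψ ∈ s := by
  constructor
  · intro h
    exact ⟨mcs_mp Λ hs (Λ.taut _ (taut_and_left φ ψ)) h,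
           mcs_mp Λ hs (Λ.taut _ (taut_and_right φ ψ)) h⟩
  · rintro ⟨h1, h2⟩
    have step : Formula.imp ψ (Formula.and φ ψ) ∈ s :=
      mcs_mp Λ hs (Λ.taut _ (taut_and_intro φ ψ)) h1
    exact mcs_closed Λ hs (SDerivFrom.mp (SDerivFrom.mem step) (SDerivFrom.mem h2))

lemma mcs_or {s : Set (Formula P)} (hs : MCS Λ s) {φ ψ : Formula P}
    (h : Formula.or φ ψ ∈ s) : φ ∈ s ∨ ψ ∈ s := by
  by_cases hφ : φ ∈ s
  · exact Or.inl hφ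
  · have hn : Formula.neg φ ∈ s := (mcs_neg Λ hs φ).mpr hφ
    have step : Formula.imp (Formula.neg φ) ψ ∈ s :=
      mcs_mp Λ hs (Λ.taut _ (taut_or_elim φ ψ)) h
    exact Or.inr (mcs_closed Λ hs
      (SDerivFrom.mp (SDerivFrom.mem step) (SDerivFrom.mem hn)))

/-- From `iffF α β ∈ thm` and `α ∈ s`, conclude `β ∈ s`. -/
lemma mcs_of_iff {s : Set (Formula P)} (hs : MCS Λ s) {α β : Formula P}
    (h : Formula.iffF α β ∈ Λ.thm) (hα : α ∈ s) : β ∈ s :=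
  mcs_mp Λ hs (Λ.mp _ _ (Λ.taut _ (taut_iff_mp α β)) h) hα

lemma mcs_of_iff' {s : Set (Formula P)} (hs : MCS Λ s) {α β : Formula P}
    (h : Formula.iffF α β ∈ Λ.thm) (hβ : β ∈ s) : α ∈ s :=
  mcs_mp Λ hs (Λ.mp _ _ (Λ.taut _ (taut_iff_mpr α β)) h) hβ

end Aux

/-- truth lemma for canonical models of systems including ΔM: for any
proof system Λ extending M^Δ and any canonical neighborhood model
M^Λ = ⟨S^Λ, N^Λ, V^Λ⟩ for Λ (i.e. |φ| ∈ N^Λ(s) iff Δ(φ ∨ ψ) ∈ s for every ψ, and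
V^Λ(p) = |p|), we have M^Λ,s ⊨ φ iff φ ∈ s, for every formula φ and every s ∈ S^Λ. -/
theorem truth_lemma_canonical_model {P : Type} (Λ : Sys P)
    (hequ : HasDeltaEqu Λ) (hdm : HasDeltaM Λ)
    (hne : Nonempty {s : Set (Formula P) // MCS Λ s})
    (N : {s : Set (Formula P) // MCS Λ s} →
         Set (Set {s : Set (Formula P) // MCS Λ s}))
    (hN : ∀ (s : {s : Set (Formula P) // MCS Λ s}) (φ : Formula P),
      proofSet Λ φ ∈ N s ↔ ∀ ψ : Formula P, Formula.delta (Formula.or φ ψ) ∈ s.val) :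
    ∀ (φ : Formula P) (s : {s : Set (Formula P) // MCS Λ s}),
      NbhdModel.sat
        ⟨{s : Set (Formula P) // MCS Λ s}, hne, N, fun p => proofSet Λ (Formula.atom p)⟩
        s φ ↔ φ ∈ s.val := by
  set M : NbhdModel P :=
    ⟨{s : Set (Formula P) // MCS Λ s}, hne, N, fun p => proofSet Λ (Formula.atom p)⟩
    with hM
  intro φ
  induction φ with
  | atom p =>
    intro s
    exact Iff.rfl
  | neg φ ih =>
    intro s
    have : M.sat s (Formula.neg φ) ↔ ¬ M.sat s φ := Iff.rfl
    rw [this, ih s, mcs_neg Λ s.2 φ]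
  | and φ ψ ihφ ihψ =>
    intro s
    have : M.sat s (Formula.and φ ψ) ↔ M.sat s φ ∧ M.sat s ψ := Iff.rfl
    rw [this, ihφ s, ihψ s, mcs_and Λ s.2 φ ψ]
  | delta φ ih =>
    intro s
    have ht : M.truthSet φ = proofSet Λ φ := Set.ext fun t => ih t
    have htc : (M.truthSet φ)ᶜ = proofSet Λ (Formula.neg φ) := by
      ext t
      simp only [Set.mem_compl_iff, ht, proofSet, Set.mem_setOf_eq]
      exact (mcs_neg Λ t.2 φ).symm
    have hsat : M.sat s (Formula.delta φ) ↔
        proofSet Λ φ ∈ N s ∨ proofSet Λ (Formula.neg φ) ∈ N s := by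
      show (M.truthSet φ ∈ M.N s ∨ (M.truthSet φ)ᶜ ∈ M.N s) ↔ _
      rw [htc, ht]
    rw [hsat, hN s φ, hN s (Formula.neg φ)]
    constructor
    · rintro (h | h)
      · -- Δ(φ ∨ φ) ∈ s, and φ ∨ φ ↔ φ, so Δφ ∈ s
        have h1 : Formula.delta (Formula.or φ φ) ∈ s.val := h φ
        have h2 : Formula.iffF (Formula.delta (Formula.or φ φ)) (Formula.delta φ)
            ∈ Λ.thm := Λ.re _ _ (Λ.taut _ (taut_or_self φ))
        exact mcs_of_iff Λ s.2 h2 h1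
      · -- Δ(¬φ ∨ ¬φ) ∈ s, so Δ¬φ ∈ s, so Δφ ∈ s by ΔEqu
        have h1 : Formula.delta (Formula.or (Formula.neg φ) (Formula.neg φ)) ∈ s.val :=
          h (Formula.neg φ)
        have h2 : Formula.iffF
            (Formula.delta (Formula.or (Formula.neg φ) (Formula.neg φ)))
            (Formula.delta (Formula.neg φ)) ∈ Λ.thm :=
          Λ.re _ _ (Λ.taut _ (taut_or_self (Formula.neg φ)))
        have h3 : Formula.delta (Formula.neg φ) ∈ s.val := mcs_of_iff Λ s.2 h2 h1
        exact mcs_of_iff' Λ s.2 (hequ φ) h3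
    · intro hΔ
      by_contra hcon
      push_neg at hcon
      obtain ⟨⟨ψ, hψ⟩, ⟨χ, hχ⟩⟩ := hcon
      have h1 : Formula.or (Formula.delta (Formula.or φ ψ))
          (Formula.delta (Formula.or (Formula.neg φ) χ)) ∈ s.val :=
        mcs_mp Λ s.2 (hdm φ ψ χ) hΔ
      rcases mcs_or Λ s.2 h1 with h2 | h2
      · exact hψ h2
      · exact hχ h2
end

section
/- The supplementation of the minimal canonical model is a canonical model: let Λ be a proof system extending M^Δ, M₀^Λ its minimal canonical model, and (M₀^Λ)⁺ its supplementation with neighborhood function (N₀^Λ)⁺. Then for every s ∈ S^Λ and every formula φ: |φ| ∈ (N₀^Λ)⁺(s) if and only if Δ(φ ∨ ψ) ∈ s for every formula ψ. -/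
section Aux

variable {P : Type}

open Formula

lemma taut_K (α β : Formula P) : Tautology (β.imp (α.imp β)) := by
  intro v hn ha
  simp only [Formula.imp, hn, ha]
  cases v α <;> cases v β <;> rfl

lemma taut_S (α β γ : Formula P) :
    Tautology ((α.imp (β.imp γ)).imp ((α.imp β).imp (α.imp γ))) := by
  intro v hn ha
  simp only [Formula.imp, hn, ha]
  cases v α <;> cases v β <;> cases v γ <;> rfl

lemma taut_id (α : Formula P) : Tautology (α.imp α) := by
  intro v hn ha
  simp only [Formula.imp, hn, ha]
  cases v α <;> rfl

lemma taut_negIntro (α θ : Formula P) :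
    Tautology ((α.imp θ).imp ((α.imp θ.neg).imp α.neg)) := by
  intro v hn ha
  simp only [Formula.imp, hn, ha]
  cases v α <;> cases v θ <;> rfl

lemma taut_dne (α : Formula P) : Tautology (α.neg.neg.imp α) := by
  intro v hn ha
  simp only [Formula.imp, hn, ha]
  cases v α <;> rfl

lemma taut_andl (α β : Formula P) : Tautology ((α.and β).imp α) := by
  intro v hn ha
  simp only [Formula.imp, hn, ha]
  cases v α <;> cases v β <;> rfl

lemma taut_orIff (χ φ ψ : Formula P) :
    Tautology ((χ.imp φ).imp (Formula.iffF (χ.or (φ.or ψ)) (φ.or ψ))) := by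
  intro v hn ha
  simp only [Formula.imp, Formula.or, Formula.iffF, hn, ha]
  cases v χ <;> cases v φ <;> cases v ψ <;> rfl

lemma deriv_mono {Λ : Sys P} {Γ Γ' : Set (Formula P)} {φ : Formula P}
    (hsub : Γ ⊆ Γ') (h : SDerivFrom Λ Γ φ) : SDerivFrom Λ Γ' φ := by
  induction h with
  | mem h => exact .mem (hsub h)
  | thm h => exact .thm h
  | mp _ _ ih1 ih2 => exact .mp ih1 ih2

lemma deduction {Λ : Sys P} {Γ : Set (Formula P)} {α β : Formula P}
    (h : SDerivFrom Λ (insert α Γ) β) : SDerivFrom Λ Γ (α.imp β) := by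
  induction h with
  | mem h =>
    rcases h with rfl | h
    · exact .thm (Λ.taut _ (taut_id _))
    · exact .mp (.thm (Λ.taut _ (taut_K _ _))) (.mem h)
  | thm h => exact .mp (.thm (Λ.taut _ (taut_K _ _))) (.thm h)
  | mp _ _ ih1 ih2 => exact .mp (.mp (.thm (Λ.taut _ (taut_S _ _ _))) ih1) ih2

lemma thm_of_empty {Λ : Sys P} {φ : Formula P}
    (h : SDerivFrom Λ (∅ : Set (Formula P)) φ) : φ ∈ Λ.thm := by
  induction h with
  | mem h => exact absurd h (Set.notMem_empty _)
  | thm h => exact h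
  | mp _ _ ih1 ih2 => exact Λ.mp _ _ ih1 ih2

lemma neg_of_inconsistent {Λ : Sys P} {Γ : Set (Formula P)} {α : Formula P}
    (h : ¬ SConsistent Λ (insert α Γ)) : SDerivFrom Λ Γ α.neg := by
  rw [SConsistent, not_not] at h
  obtain ⟨θ, d1, d2⟩ := h
  have h1 := deduction d1
  have h2 := deduction d2
  exact .mp (.mp (.thm (Λ.taut _ (taut_negIntro α θ))) h1) h2

lemma deriv_from_chain {Λ : Sys P} {c : Set (Set (Formula P))}
    (hc : IsChain (· ⊆ ·) c) (hne : c.Nonempty) {φ : Formula P}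
    (h : SDerivFrom Λ (⋃₀ c) φ) : ∃ t ∈ c, SDerivFrom Λ t φ := by
  induction h with
  | mem h =>
    obtain ⟨t, ht, hφ⟩ := h
    exact ⟨t, ht, .mem hφ⟩
  | thm h =>
    obtain ⟨t, ht⟩ := hne
    exact ⟨t, ht, .thm h⟩
  | mp _ _ ih1 ih2 =>
    obtain ⟨t1, ht1, d1⟩ := ih1
    obtain ⟨t2, ht2, d2⟩ := ih2
    rcases eq_or_ne t1 t2 with rfl | hne'
    · exact ⟨t1, ht1, .mp d1 d2⟩
    rcases hc ht1 ht2 hne' with hsub | hsub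
    · exact ⟨t2, ht2, .mp (deriv_mono hsub d1) d2⟩
    · exact ⟨t1, ht1, .mp d1 (deriv_mono hsub d2)⟩

lemma lindenbaum {Λ : Sys P} {Γ : Set (Formula P)} (h : SConsistent Λ Γ) :
    ∃ s : Set (Formula P), Γ ⊆ s ∧ MCS Λ s := by
  have hchain : ∀ c ⊆ {Δ : Set (Formula P) | SConsistent Λ Δ}, IsChain (· ⊆ ·) c →
      c.Nonempty → ∃ ub ∈ {Δ : Set (Formula P) | SConsistent Λ Δ}, ∀ s ∈ c, s ⊆ ub := by
    intro c hcS hc hne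
    refine ⟨⋃₀ c, ?_, fun s hs => Set.subset_sUnion_of_mem hs⟩
    intro ⟨θ, d1, d2⟩
    obtain ⟨t1, ht1, e1⟩ := deriv_from_chain hc hne d1
    obtain ⟨t2, ht2, e2⟩ := deriv_from_chain hc hne d2
    rcases eq_or_ne t1 t2 with rfl | hne'
    · exact hcS ht1 ⟨θ, e1, e2⟩
    rcases hc ht1 ht2 hne' with hsub | hsub
    · exact hcS ht2 ⟨θ, deriv_mono hsub e1, e2⟩
    · exact hcS ht1 ⟨θ, e1, deriv_mono hsub e2⟩
  obtain ⟨m, hΓm, hmem, hmax⟩ :=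
    zorn_subset_nonempty {Δ : Set (Formula P) | SConsistent Λ Δ} hchain Γ h
  refine ⟨m, hΓm, hmem, fun φ => ?_⟩
  by_contra hcon
  push_neg at hcon
  obtain ⟨h1, h2⟩ := hcon
  have i1 : ¬ SConsistent Λ (insert φ m) := by
    intro hcons
    exact h1 (hmax hcons (Set.subset_insert _ _) (Set.mem_insert _ _))
  have i2 : ¬ SConsistent Λ (insert φ.neg m) := by
    intro hcons
    exact h2 (hmax hcons (Set.subset_insert _ _) (Set.mem_insert _ _))
  exact hmem ⟨φ.neg, neg_of_inconsistent i1, neg_of_inconsistent i2⟩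

lemma mcs_mp_s13 {Λ : Sys P} {s : Set (Formula P)} (hs : MCS Λ s) {α β : Formula P}
    (himp : α.imp β ∈ Λ.thm) (hα : α ∈ s) : β ∈ s := by
  rcases hs.2 β with hβ | hβ
  · exact hβ
  · exact absurd ⟨β, .mp (.thm himp) (.mem hα), .mem hβ⟩ hs.1

end Aux

/-- the supplementation of the minimal canonical model is a canonical
model: for any proof system Λ extending M^Δ, every maximal Λ-consistent s and every
formula φ, |φ| ∈ (N₀^Λ)⁺(s) iff Δ(φ ∨ ψ) ∈ s for every formula ψ. -/
theorem suppl_minimal_canonical_is_canonical {P : Type} (Λ : Sys P)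
    (hequ : HasDeltaEqu Λ) (hdm : HasDeltaM Λ) :
    ∀ (s : {s : Set (Formula P) // MCS Λ s}) (φ : Formula P),
      proofSet Λ φ ∈ suppN (minN Λ) s ↔
      ∀ ψ : Formula P, Formula.delta (Formula.or φ ψ) ∈ s.val := by
  intro s φ
  constructor
  · rintro ⟨Y, ⟨χ, rfl, hχ⟩, hsub⟩
    have hthm : χ.imp φ ∈ Λ.thm := by
      have hinc : ¬ SConsistent Λ (insert φ.neg {χ}) := by
        intro hcons
        obtain ⟨t, hΓt, ht⟩ := lindenbaum hcons
        have hχt : χ ∈ t := hΓt (by simp)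
        have hφt : φ ∈ t :=
          hsub (show (⟨t, ht⟩ : {s // MCS Λ s}) ∈ proofSet Λ χ from hχt)
        have hnφt : φ.neg ∈ t := hΓt (Set.mem_insert _ _)
        exact ht.1 ⟨φ, .mem hφt, .mem hnφt⟩
      have d1 : SDerivFrom Λ {χ} φ.neg.neg := neg_of_inconsistent hinc
      have d2 : SDerivFrom Λ (insert χ (∅ : Set (Formula P))) φ :=
        deriv_mono (by simp) (SDerivFrom.mp (.thm (Λ.taut _ (taut_dne φ))) d1)
      exact thm_of_empty (deduction d2)
    intro ψ
    have hΔ := hχ (φ.or ψ)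
    have hiff := Λ.mp _ _ (Λ.taut _ (taut_orIff χ φ ψ)) hthm
    have hre := Λ.re _ _ hiff
    have himp := Λ.mp _ _ (Λ.taut _ (taut_andl _ _)) hre
    exact mcs_mp_s13 s.2 himp hΔ
  · intro h
    exact ⟨proofSet Λ φ, ⟨φ, rfl, h⟩, subset_rfl⟩
end
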